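/- For every integer n ≥ 2, Σ_{q=0}^{n} C(2n, 2q)·b_{2q}·b_{2n-2q} = Σ_{q=0}^{n} C(2n, 2q)·b_{2q}·b_{2n-2q}·2^{2q} where the equality holds because b_{2q}·2^{2q}-weighted and unweighted convolutions of even Bernoulli numbers agree; equivalently, Σ_{q=0}^{n} C(2n,2q) b_{2q} b_{2n-2q} (2^{2q} - 1) = 0 for n ≥ 2. -/

import Mathlib

open PowerSeries Finset

private lemma bernoulli_odd_zero {k : ℕ} (h : Odd k) (hk : 1 < k) : bernoulli k = 0 := by
  rw [bernoulli_eq_bernoulli'_of_ne_one (by omega), bernoulli'_eq_zero_of_odd h hk]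

private lemma exp_sq : (exp ℚ) ^ 2 = rescale (2 : ℚ) (exp ℚ) := by
  have := exp_pow_eq_rescale_exp (A := ℚ) 2
  simpa using this

private lemma key :
    bernoulliPowerSeries ℚ * (rescale (2 : ℚ) (bernoulliPowerSeries ℚ) - bernoulliPowerSeries ℚ)
      = -(PowerSeries.C (1/4)) * rescale (2 : ℚ) (X * bernoulliPowerSeries ℚ) := by
  set B := bernoulliPowerSeries ℚ with hBdef
  have hB : B * (exp ℚ - 1) = X := bernoulliPowerSeries_mul_exp_sub_one ℚ
  have hC2 : (PowerSeries.C 2 : ℚ⟦X⟧) = (2 : ℚ⟦X⟧) := map_ofNat _ 2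
  have hne : (exp ℚ - 1) * (exp ℚ + 1) ≠ 0 := by
    apply mul_ne_zero
    · intro h
      have := congrArg (PowerSeries.coeff 1) h
      simp [coeff_exp] at this
    · intro h
      have := congrArg (PowerSeries.constantCoeff) h
      simp [constantCoeff_exp] at this
  apply mul_right_cancel₀ hne
  have h2 : rescale (2 : ℚ) B * ((exp ℚ) ^ 2 - 1) = PowerSeries.C 2 * X := by
    have : rescale (2 : ℚ) (B * (exp ℚ - 1)) = rescale (2 : ℚ) X := by rw [hB]
    rw [map_mul, map_sub, map_one, ← exp_sq, rescale_X] at this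
    exact this
  have hsq : (exp ℚ - 1) * (exp ℚ + 1) = (exp ℚ) ^ 2 - 1 := by ring
  -- LHS
  have hlhs : B * (rescale (2 : ℚ) B - B) * ((exp ℚ - 1) * (exp ℚ + 1)) = -(X ^ 2) := by
    have e1 : B * rescale (2 : ℚ) B * ((exp ℚ) ^ 2 - 1) = B * (PowerSeries.C 2 * X) := by
      rw [mul_assoc, h2]
    have e2 : B * B * ((exp ℚ - 1) * (exp ℚ + 1)) = X * (B * (exp ℚ + 1)) := by
      calc B * B * ((exp ℚ - 1) * (exp ℚ + 1))
          = (B * (exp ℚ - 1)) * (B * (exp ℚ + 1)) := by ring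
        _ = X * (B * (exp ℚ + 1)) := by rw [hB]
    have e3 : X * (B * (exp ℚ + 1)) = X * B * 2 + X * (B * (exp ℚ - 1)) := by ring
    calc B * (rescale (2 : ℚ) B - B) * ((exp ℚ - 1) * (exp ℚ + 1))
        = B * rescale (2 : ℚ) B * ((exp ℚ) ^ 2 - 1)
          - B * B * ((exp ℚ - 1) * (exp ℚ + 1)) := by rw [hsq]; ring
      _ = B * (PowerSeries.C 2 * X) - (X * B * 2 + X * (B * (exp ℚ - 1))) := by
            rw [e1, e2, e3]
      _ = B * (PowerSeries.C 2 * X) - (X * B * 2 + X * X) := by rw [hB]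
      _ = -(X ^ 2) := by rw [hC2]; ring
  rw [hlhs]
  -- RHS
  have hXB : X * B * (exp ℚ - 1) = X * X := by rw [mul_assoc, hB]
  have hr : rescale (2 : ℚ) (X * B) * ((exp ℚ) ^ 2 - 1) = rescale (2 : ℚ) (X * X) := by
    calc rescale (2 : ℚ) (X * B) * ((exp ℚ) ^ 2 - 1)
        = rescale (2 : ℚ) (X * B) * (rescale (2 : ℚ) (exp ℚ) - rescale (2 : ℚ) 1) := by
          rw [← exp_sq, map_one]
      _ = rescale (2 : ℚ) (X * B * (exp ℚ - 1)) := by rw [← map_sub, ← map_mul]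
      _ = rescale (2 : ℚ) (X * X) := by rw [hXB]
  rw [mul_assoc, hsq, hr, map_mul, rescale_X]
  symm
  calc -(PowerSeries.C (1/4 : ℚ)) * (PowerSeries.C (2 : ℚ) * X * (PowerSeries.C (2 : ℚ) * X))
      = -(PowerSeries.C (1/4 : ℚ) * PowerSeries.C (2 : ℚ) * PowerSeries.C (2 : ℚ)) * X ^ 2 := by ring
    _ = -(X ^ 2) := by rw [← map_mul, ← map_mul]; norm_num

private lemma even_sum {m : ℕ} (f : ℕ → ℚ) (hf : ∀ k, Odd k → k ≤ 2 * m → f k = 0) :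
    ∑ k ∈ range (2 * m + 1), f k = ∑ q ∈ range (m + 1), f (2 * q) := by
  induction m with
  | zero => simp
  | succ m ih =>
    have h2 : 2 * (m + 1) + 1 = (2 * m + 1) + 1 + 1 := by ring
    rw [h2, sum_range_succ f ((2 * m + 1) + 1), sum_range_succ f (2 * m + 1),
      sum_range_succ (fun q => f (2 * q)) (m + 1),
      ih (fun k hk hk' => hf k hk (by omega)), hf (2 * m + 1) ⟨m, by ring⟩ (by omega)]
    rw [show 2 * m + 1 + 1 = 2 * (m + 1) from by omega]
    ring

open Finset in
/-- For every integer `n ≥ 2`,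
`∑_{q=0}^{n} C(2n,2q) b_{2q} b_{2n-2q} (2^{2q} - 1) = 0`. -/
theorem bernoulli_even_convolution_weighted (n : ℕ) (hn : 2 ≤ n) :
    ∑ q ∈ Finset.range (n + 1),
        ((2 * n).choose (2 * q) : ℚ) * bernoulli (2 * q) * bernoulli (2 * n - 2 * q)
          * ((2 : ℚ) ^ (2 * q) - 1) = 0 := by
  have hkey := key
  have hcoeff := congrArg (PowerSeries.coeff (2 * n)) hkey
  -- RHS coefficient is 0
  have hrhs : (PowerSeries.coeff (2 * n))
      (-(PowerSeries.C (1/4)) * rescale (2 : ℚ) (X * bernoulliPowerSeries ℚ)) = 0 := by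
    have hb : bernoulli (2 * n - 1) = 0 :=
      bernoulli_odd_zero ⟨n - 1, by omega⟩ (by omega)
    have h2n : 2 * n = (2 * n - 1) + 1 := by omega
    rw [neg_mul, map_neg, neg_eq_zero, PowerSeries.coeff_C_mul, coeff_rescale, h2n,
      PowerSeries.coeff_succ_X_mul]
    simp only [bernoulliPowerSeries, coeff_mk]
    rw [hb]
    simp
  rw [hrhs] at hcoeff
  -- LHS coefficient as convolution sum
  rw [PowerSeries.coeff_mul] at hcoeff
  have hterm : ∀ p ∈ Finset.HasAntidiagonal.antidiagonal (2 * n),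
      (PowerSeries.coeff p.1) (bernoulliPowerSeries ℚ) *
        (PowerSeries.coeff p.2)
          (rescale (2 : ℚ) (bernoulliPowerSeries ℚ) - bernoulliPowerSeries ℚ)
      = (bernoulli p.1 / p.1.factorial) *
          (((2:ℚ) ^ p.2 - 1) * bernoulli p.2 / p.2.factorial) := by
    intro p _
    simp only [map_sub, coeff_rescale, bernoulliPowerSeries, coeff_mk,
      Algebra.algebraMap_self, map_id, id_eq, RingHom.id_apply]
    ring
  rw [Finset.sum_congr rfl hterm] at hcoeff
  rw [Finset.Nat.sum_antidiagonal_eq_sum_range_succ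
    (fun i j => (bernoulli i / i.factorial) * (((2:ℚ) ^ j - 1) * bernoulli j / j.factorial))]
    at hcoeff
  -- drop odd terms
  have hodd : ∀ k, Odd k → k ≤ 2 * n →
      (bernoulli k / k.factorial) *
        (((2:ℚ) ^ (2*n - k) - 1) * bernoulli (2*n - k) / (2*n - k).factorial) = 0 := by
    intro k hk hkle
    rcases eq_or_ne k 1 with rfl | h1
    · have : bernoulli (2 * n - 1) = 0 := bernoulli_odd_zero ⟨n - 1, by omega⟩ (by omega)
      rw [this]; ring
    · have hk1 : 1 < k := by rcases hk with ⟨j, rfl⟩; omega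
      rw [bernoulli_odd_zero hk hk1]; ring
  rw [even_sum _ hodd] at hcoeff
  -- relate to goal: multiply by (2n)! and flip the summation index
  have hfac : ∀ q ∈ Finset.range (n + 1),
      ((2 * n).choose (2 * q) : ℚ) * bernoulli (2 * q) * bernoulli (2 * n - 2 * q)
          * ((2 : ℚ) ^ (2 * q) - 1)
      = ((2 * n).factorial : ℚ) *
          ((bernoulli (2 * (n - q)) / (2 * (n - q)).factorial) *
            (((2:ℚ) ^ (2*n - 2*(n-q)) - 1) * bernoulli (2*n - 2*(n-q)) / (2*n - 2*(n-q)).factorial)) := by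
    intro q hq
    rw [Finset.mem_range] at hq
    have hqn : q ≤ n := by omega
    have h1 : 2 * n - 2 * (n - q) = 2 * q := by omega
    have h2 : 2 * (n - q) = 2 * n - 2 * q := by omega
    rw [h1, h2]
    have hle : 2 * q ≤ 2 * n := by omega
    have hch : ((2 * n).choose (2 * q) : ℚ) * (2*q).factorial * (2*n - 2*q).factorial
        = ((2*n).factorial : ℚ) := by
      exact_mod_cast congrArg (Nat.cast (R := ℚ))
        (Nat.choose_mul_factorial_mul_factorial hle)
    have hf1 : ((2*q).factorial : ℚ) ≠ 0 := by positivity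
    have hf2 : ((2*n - 2*q).factorial : ℚ) ≠ 0 := by positivity
    field_simp
    linear_combination (bernoulli (2*q) * bernoulli (2*n - 2*q) * ((2:ℚ)^(2*q) - 1)) * hch
  rw [Finset.sum_congr rfl hfac, ← Finset.mul_sum]
  have hflip := Finset.sum_range_reflect
    (fun q => (bernoulli (2 * q) / ((2 * q).factorial : ℚ)) *
      (((2:ℚ) ^ (2*n - 2*q) - 1) * bernoulli (2*n - 2*q) / ((2*n - 2*q).factorial : ℚ))) (n + 1)
  simp only [Nat.add_sub_cancel] at hflip
  rw [hflip, hcoeff, mul_zero]
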